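/- Let r ≥ 1 be an integer, let σ ⊆ ℝ^r be a convex set, and let γ lie in the relative interior of σ. Suppose that for each coordinate i ∈ {1,…,r}, either there is an integer n such that δ_i = n for every δ ∈ σ, or δ_i is not an integer for every δ in the relative interior of σ. Then ⌈δ_i⌉ ≤ ⌈γ_i⌉ for every δ ∈ σ and every i; consequently ⌈γ⌉ is the componentwise maximum of the set {⌈δ⌉ : δ ∈ σ}. -/
import Mathlib

open Set

/-- Open segment points between an intrinsic-interior point and a point of a convex set
lie in the intrinsic interior. -/
lemma aux_seg_mem_intrinsicInterior {r : ℕ} {σ : Set (Fin r → ℝ)} (hσ : Convex ℝ σ)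
    {γ δ : Fin r → ℝ} (hγ : γ ∈ intrinsicInterior ℝ σ) (hδ : δ ∈ σ)
    {t : ℝ} (ht0 : 0 < t) (ht1 : t < 1) :
    (1 - t) • γ + t • δ ∈ intrinsicInterior ℝ σ := by
  obtain ⟨y, hy, hyγ⟩ := mem_intrinsicInterior.1 hγ
  rw [mem_interior_iff_mem_nhds, mem_nhds_subtype] at hy
  obtain ⟨U, hU, hUσ⟩ := hy
  have hγS : γ ∈ affineSpan ℝ σ := hyγ ▸ y.2
  have hδS : δ ∈ affineSpan ℝ σ := subset_affineSpan ℝ σ hδ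
  have h1t : (1 : ℝ) - t ≠ 0 := by linarith
  set p := (1 - t) • γ + t • δ with hp
  have hpS : p ∈ affineSpan ℝ σ := by
    have := (affineSpan ℝ σ).smul_vsub_vadd_mem (1 - t) hγS hδS hδS
    convert this using 1
    simp only [vsub_eq_sub, vadd_eq_add]
    module
  set h : (Fin r → ℝ) → (Fin r → ℝ) := fun q => (1 / (1 - t)) • (q - δ) + δ with hh
  have hcont : Continuous h := by fun_prop
  have hhp : h p = γ := by
    simp only [hh, hp]
    funext i
    simp only [Pi.add_apply, Pi.smul_apply, Pi.sub_apply, smul_eq_mul]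
    field_simp
    ring
  refine mem_intrinsicInterior.2 ⟨⟨p, hpS⟩, ?_, rfl⟩
  rw [mem_interior_iff_mem_nhds, mem_nhds_subtype]
  refine ⟨h ⁻¹' U, ?_, ?_⟩
  · refine hcont.continuousAt.preimage_mem_nhds ?_
    rw [hhp]
    rwa [hyγ] at hU
  · rintro ⟨q, hqS⟩ hq
    simp only [mem_preimage] at hq ⊢
    have hhqS : h q ∈ affineSpan ℝ σ := by
      have := (affineSpan ℝ σ).smul_vsub_vadd_mem (1 / (1 - t)) hqS hδS hδS
      simpa [hh, vsub_eq_sub, vadd_eq_add, one_div] using this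
    have hhqσ : h q ∈ σ := hUσ (show (⟨h q, hhqS⟩ : affineSpan ℝ σ) ∈ _ from hq)
    have hq' : q = (1 - t) • (h q) + t • δ := by
      funext i
      simp only [hh, Pi.add_apply, Pi.smul_apply, Pi.sub_apply, smul_eq_mul]
      field_simp
      ring
    rw [hq']
    exact hσ hhqσ hδ (by linarith) ht0.le (by ring)

/-- Let `σ ⊆ ℝ^r` be convex and let `γ` lie in its relative interior.  If for each
coordinate `i` either `δ i` is a fixed integer for all `δ ∈ σ`, or `δ i` is never an
integer for `δ` in the relative interior of `σ`, then `⌈δ i⌉ ≤ ⌈γ i⌉` for all `δ ∈ σ`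
and all `i`; consequently `⌈γ⌉` is the componentwise maximum of `{⌈δ⌉ : δ ∈ σ}`. -/
theorem ceiling_is_componentwise_max (r : ℕ) (hr : 1 ≤ r)
    (σ : Set (Fin r → ℝ)) (hσ : Convex ℝ σ)
    (γ : Fin r → ℝ) (hγ : γ ∈ intrinsicInterior ℝ σ)
    (hwalls : ∀ i : Fin r,
      (∃ n : ℤ, ∀ δ ∈ σ, δ i = (n : ℝ)) ∨
      (∀ δ ∈ intrinsicInterior ℝ σ, ¬ ∃ n : ℤ, δ i = (n : ℝ))) :
    (∀ δ ∈ σ, ∀ i, ⌈δ i⌉ ≤ ⌈γ i⌉) ∧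
    (∀ i, IsGreatest {n : ℤ | ∃ δ ∈ σ, n = ⌈δ i⌉} ⌈γ i⌉) := by
  have hγσ : γ ∈ σ := intrinsicInterior_subset hγ
  have main : ∀ δ ∈ σ, ∀ i, ⌈δ i⌉ ≤ ⌈γ i⌉ := by
    intro δ hδ i
    rcases hwalls i with ⟨n, hn⟩ | hnever
    · rw [hn δ hδ, hn γ hγσ]
    · by_contra hlt
      push_neg at hlt
      have hδgt : (⌈γ i⌉ : ℝ) < δ i := by
        by_contra hle
        push_neg at hle
        exact absurd (Int.ceil_le.2 hle) (not_le.2 hlt)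
      have hγlt : γ i < (⌈γ i⌉ : ℝ) := by
        rcases lt_or_eq_of_le (Int.le_ceil (γ i)) with h | h
        · exact h
        · exact absurd ⟨⌈γ i⌉, h⟩ (hnever γ hγ)
      set c : ℝ := (⌈γ i⌉ : ℝ)
      set t : ℝ := (c - γ i) / (δ i - γ i) with ht
      have hden : 0 < δ i - γ i := by linarith
      have ht0 : 0 < t := div_pos (by linarith) hden
      have ht1 : t < 1 := (div_lt_one hden).2 (by linarith)
      have hmem := aux_seg_mem_intrinsicInterior hσ hγ hδ ht0 ht1
      refine hnever _ hmem ⟨⌈γ i⌉, ?_⟩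
      show (1 - t) * γ i + t * δ i = c
      rw [ht]
      field_simp
      ring
  refine ⟨main, fun i => ⟨⟨γ, hγσ, rfl⟩, ?_⟩⟩
  rintro n ⟨δ, hδ, rfl⟩
  exact main δ hδ i
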